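/- The space c_{0I}³(Δ, F) is not symmetric in general: there exists x ∈ c_{0I}³(Δ, F) (with f_{pqr} = identity) and a permutation π of index points such that the rearranged sequence (x_{π(p,q,r)}) has |Δx_{π(p,q,r)}| = 1 for infinitely many (p,q,r), hence does not lie in c_{0I}³(Δ, F) when I is the ideal of finite sets. -/

import Mathlib

/-!
With ℕ indexed from 0, the sequence `x = 1_{r ≠ 0}` depends on `r` alone, so `Δx ≡ 0`.
The set `{r ≠ 0}` and the set of points with all coordinates even are both infinite and
co-infinite in the countable set ℕ³, so some permutation `π` carries the second onto the first.
Then `x ∘ π` is the indicator of the all-even points, and at such a point `Δ(x ∘ π) = 1`: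
the seven other corners of the unit cube there have an odd coordinate.
-/

/-- The triple difference operator. -/
def tDelta (x : ℕ × ℕ × ℕ → ℂ) (t : ℕ × ℕ × ℕ) : ℂ :=
  x (t.1, t.2.1, t.2.2) - x (t.1 + 1, t.2.1, t.2.2) - x (t.1, t.2.1 + 1, t.2.2)
    - x (t.1, t.2.1, t.2.2 + 1) + x (t.1 + 1, t.2.1 + 1, t.2.2)
    + x (t.1 + 1, t.2.1, t.2.2 + 1) + x (t.1, t.2.1 + 1, t.2.2 + 1)
    - x (t.1 + 1, t.2.1 + 1, t.2.2 + 1)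

theorem exists_perm_preimage_eq_of_infinite {α : Type*} [Countable α] {A B : Set α}
    (hA : A.Infinite) (hAc : Aᶜ.Infinite) (hB : B.Infinite) (hBc : Bᶜ.Infinite) :
    ∃ π : Equiv.Perm α, π ⁻¹' B = A := by
  classical
  have := hA.to_subtype
  have := hAc.to_subtype
  have := hB.to_subtype
  have := hBc.to_subtype
  obtain ⟨e⟩ : Nonempty (A ≃ B) := nonempty_equiv_of_countable
  obtain ⟨f⟩ : Nonempty (↥Aᶜ ≃ ↥Bᶜ) := nonempty_equiv_of_countable
  refine ⟨e.subtypeCongr f, Set.ext fun s => ?_⟩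
  by_cases hs : s ∈ A
  · simp [Equiv.subtypeCongr, Equiv.sumCompl, hs]
  · simp [Equiv.subtypeCongr, Equiv.sumCompl, hs]
    exact (f ⟨s, hs⟩).2

theorem tDelta_fun_snd_snd_eq_zero (g : ℕ → ℂ) : tDelta (fun s => g s.2.2) = 0 := by
  ext t
  simp only [tDelta, Pi.zero_apply]
  ring

def allEven : Set (ℕ × ℕ × ℕ) := {s | Even s.1 ∧ Even s.2.1 ∧ Even s.2.2}

theorem allEven_infinite : allEven.Infinite :=
  Set.infinite_of_injective_forall_mem (f := fun n : ℕ => (2 * n, 2 * n, 2 * n))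
    (fun a b h => by simpa using h) (fun n => by simp [allEven])

theorem allEven_compl_infinite : allEvenᶜ.Infinite :=
  Set.infinite_of_injective_forall_mem (f := fun n : ℕ => (1, n, 0))
    (fun a b h => by simpa using h) (fun n => by simp [allEven])

theorem tDelta_indicator_allEven_of_mem {t : ℕ × ℕ × ℕ} (ht : t ∈ allEven) :
    tDelta (allEven.indicator 1) t = 1 := by
  obtain ⟨h1, h2, h3⟩ := ht
  simp [tDelta, allEven, Set.indicator, h1, h2, h3, Nat.even_add_one]

theorem setOf_snd_snd_ne_zero_infinite : {s : ℕ × ℕ × ℕ | s.2.2 ≠ 0}.Infinite :=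
  Set.infinite_of_injective_forall_mem (f := fun n : ℕ => (n, 0, 1))
    (fun a b h => by simpa using h) (fun n => by simp)

theorem setOf_snd_snd_ne_zero_compl_infinite : {s : ℕ × ℕ × ℕ | s.2.2 ≠ 0}ᶜ.Infinite :=
  Set.infinite_of_injective_forall_mem (f := fun n : ℕ => (n, 0, 0))
    (fun a b h => by simpa using h) (fun n => by simp)

/-- c_{0I}³(Δ,F) is not symmetric: there is a sequence in the space (for the
finite-set ideal and identity modulus) and a permutation of ℕ³ whose
rearrangement has |Δ| = 1 infinitely often, hence lies outside the space. -/
theorem stmt_15 :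
    ∃ x : ℕ × ℕ × ℕ → ℂ, ∃ π : Equiv.Perm (ℕ × ℕ × ℕ),
      (∀ ε > (0 : ℝ), {t | ε ≤ ‖tDelta x t‖}.Finite) ∧
      {t | ‖tDelta (fun s => x (π s)) t‖ = 1}.Infinite ∧
      ¬ (∀ ε > (0 : ℝ), {t | ε ≤ ‖tDelta (fun s => x (π s)) t‖}.Finite) := by
  obtain ⟨π, hπ⟩ := exists_perm_preimage_eq_of_infinite allEven_infinite allEven_compl_infinite
    setOf_snd_snd_ne_zero_infinite setOf_snd_snd_ne_zero_compl_infinite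
  set x : ℕ × ℕ × ℕ → ℂ := {s | s.2.2 ≠ 0}.indicator 1
  have hx : tDelta x = 0 := tDelta_fun_snd_snd_eq_zero (({0}ᶜ : Set ℕ).indicator 1)
  have hxπ : (fun s => x (π s)) = allEven.indicator 1 := by
    rw [← hπ]
    exact funext fun s => (Set.indicator_comp_right π).symm
  have hinf : {t | ‖tDelta (fun s => x (π s)) t‖ = 1}.Infinite :=
    allEven_infinite.mono fun t ht => by simp [hxπ, tDelta_indicator_allEven_of_mem ht]
  refine ⟨x, π, fun ε hε => ?_, hinf, fun h => ?_⟩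
  · simp [hx, hε.not_ge]
  · exact hinf ((h 1 one_pos).subset fun t ht => ht.ge)
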